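/- arXiv:1206.5059 — 2 statements merged into one kernel-verified Lean document; each statement's English description precedes it below -/
import Mathlib

section
/- For every x ∈ ℝ² with x ≠ 0, the convective derivative satisfies ((u·∇)u)(x) = −(h(|x| − δ)²/|x|²) · x, where ((u·∇)u)(x) denotes the derivative of u at x applied to the vector u(x); that is, the convective derivative of the parallel laminar flow is purely centripetal, pointing toward the origin with magnitude |u(x)|²/|x|. -/
/-!
Write `u = φ • J`, where `J (a, b) = (b, -a)` is the quarter turn and `φ(x) = h(|x| − δ)/|x|` is
radial. By the product rule `Du(x)(u x) = (Dφ(x)(u x)) • J x + φ(x) • J (u x)`. The vector `u x`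
is tangent to the circle through `x`, along which the radial factor `φ` is constant, so the first
term vanishes; since `J² = -1`, the second one is `-φ(x)² • x`.
-/

noncomputable section

/-- Poiseuille-type speed profile `h(r) = α₁ r − (α₂/2) r²`. -/
def prof (α₁ α₂ r : ℝ) : ℝ := α₁ * r - α₂ / 2 * r ^ 2

/-- Euclidean norm on `ℝ × ℝ`. -/
def nrm (x : ℝ × ℝ) : ℝ := Real.sqrt (x.1 ^ 2 + x.2 ^ 2)

/-- Parallel laminar flow `u(x) = h(|x| − δ) (x₂, −x₁)/|x|` around the origin. -/
def vel (δ α₁ α₂ : ℝ) (x : ℝ × ℝ) : ℝ × ℝ :=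
  (prof α₁ α₂ (nrm x - δ) / nrm x) • (x.2, -x.1)

theorem fderiv_smul_clm_apply_smul_self {𝕜 E : Type*} [NontriviallyNormedField 𝕜]
    [NormedAddCommGroup E] [NormedSpace 𝕜 E] {φ : E → 𝕜} {A : E →L[𝕜] E} {x : E}
    (hφ : DifferentiableAt 𝕜 φ x) (hφA : fderiv 𝕜 φ x (A x) = 0) :
    fderiv 𝕜 (fun y => φ y • A y) x (φ x • A x) = φ x ^ 2 • A (A x) := by
  have h : HasFDerivAt (fun y => φ y • A y) _ x := hφ.hasFDerivAt.smul A.hasFDerivAt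
  rw [h.fderiv]
  simp [hφA, smul_smul, sq]

def rot : ℝ × ℝ →L[ℝ] ℝ × ℝ :=
  (ContinuousLinearMap.snd ℝ ℝ ℝ).prod (-ContinuousLinearMap.fst ℝ ℝ ℝ)

theorem rot_apply (x : ℝ × ℝ) : rot x = (x.2, -x.1) := rfl

theorem rot_rot (x : ℝ × ℝ) : rot (rot x) = -x := by
  simp [rot_apply, Prod.ext_iff]

theorem sq_add_sq_pos_of_ne_zero {x : ℝ × ℝ} (hx : x ≠ 0) : 0 < x.1 ^ 2 + x.2 ^ 2 := by
  obtain ⟨a, b⟩ := x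
  rcases not_and_or.mp (Prod.mk_eq_zero.not.mp hx) with ha | hb
  · positivity
  · positivity

theorem nrm_pos {x : ℝ × ℝ} (hx : x ≠ 0) : 0 < nrm x :=
  Real.sqrt_pos.mpr (sq_add_sq_pos_of_ne_zero hx)

theorem differentiableAt_nrm {x : ℝ × ℝ} (hx : x ≠ 0) : DifferentiableAt ℝ nrm x :=
  (by fun_prop : DifferentiableAt ℝ (fun y : ℝ × ℝ => y.1 ^ 2 + y.2 ^ 2) x).sqrt
    (sq_add_sq_pos_of_ne_zero hx).ne'

theorem fderiv_nrm_rot {x : ℝ × ℝ} (hx : x ≠ 0) : fderiv ℝ nrm x (rot x) = 0 := by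
  have h : HasFDerivAt (fun y : ℝ × ℝ => √(y.1 ^ 2 + y.2 ^ 2)) _ x :=
    ((hasFDerivAt_fst.pow 2).add (hasFDerivAt_snd.pow 2)).sqrt (sq_add_sq_pos_of_ne_zero hx).ne'
  rw [show nrm = fun y : ℝ × ℝ => √(y.1 ^ 2 + y.2 ^ 2) from rfl, h.fderiv]
  simp only [Pi.add_apply, one_div, mul_inv_rev, Nat.add_one_sub_one, pow_one, nsmul_eq_mul,
    Nat.cast_ofNat, smul_apply, add_apply,
    ContinuousLinearMap.coe_fst', ContinuousLinearMap.coe_snd', smul_eq_mul, rot_apply]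
  ring

theorem fderiv_comp_nrm_rot {ψ : ℝ → ℝ} {x : ℝ × ℝ} (hx : x ≠ 0)
    (hψ : DifferentiableAt ℝ ψ (nrm x)) : fderiv ℝ (fun y => ψ (nrm y)) x (rot x) = 0 := by
  rw [fderiv_fun_comp x hψ (differentiableAt_nrm hx), ContinuousLinearMap.comp_apply,
    fderiv_nrm_rot hx, map_zero]

theorem convective_derivative_of_parallel_laminar_flow_general
    (δ α₁ α₂ : ℝ)
    (x : ℝ × ℝ) (hx : x ≠ 0) :
    fderiv ℝ (vel δ α₁ α₂) x (vel δ α₁ α₂ x)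
      = (-(prof α₁ α₂ (nrm x - δ) ^ 2 / nrm x ^ 2)) • x := by
  have hψ : DifferentiableAt ℝ (fun r => prof α₁ α₂ (r - δ) / r) (nrm x) := by
    unfold prof
    fun_prop (disch := exact (nrm_pos hx).ne')
  calc fderiv ℝ (vel δ α₁ α₂) x (vel δ α₁ α₂ x)
      = (prof α₁ α₂ (nrm x - δ) / nrm x) ^ 2 • rot (rot x) :=
        fderiv_smul_clm_apply_smul_self (hψ.comp x (differentiableAt_nrm hx))
          (fderiv_comp_nrm_rot hx hψ)
    _ = (-(prof α₁ α₂ (nrm x - δ) ^ 2 / nrm x ^ 2)) • x := by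
      rw [rot_rot, smul_neg, ← neg_smul, div_pow]

/-- The convective derivative `(u·∇)u` of the parallel laminar flow is purely
centripetal: it points toward the origin with magnitude `|u(x)|²/|x|`. -/
theorem convective_derivative_of_parallel_laminar_flow
    (δ α₁ α₂ : ℝ) (hδ : 0 < δ) (hα₁ : 0 < α₁) (hα₂ : 0 < α₂)
    (x : ℝ × ℝ) (hx : x ≠ 0) :
    fderiv ℝ (vel δ α₁ α₂) x (vel δ α₁ α₂ x)
      = (-(prof α₁ α₂ (nrm x - δ) ^ 2 / nrm x ^ 2)) • x :=
  convective_derivative_of_parallel_laminar_flow_general δ α₁ α₂ x hx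
end
end

section
/- Fix r ≥ 0 and define f, g : ℝ → ℝ by f(s) = h(√((δ + r)² + s²) − δ) · (δ + r)/√((δ + r)² + s²) and g(s) = −h(√((δ + r)² + s²) − δ) · s/√((δ + r)² + s²) (the tangential and normal components of the parallel laminar flow in Cartesian coordinates based at a boundary point). Then the second derivatives at s = 0 satisfy f''(0) = (1/(r + δ))(α₁ − α₂ r − h(r)/(r + δ)) and g''(0) = 0. Moreover the function r ↦ f(0) = h(r) has constant second derivative −α₂ in r. -/
noncomputable section

/-! The normal component is odd in `s`, so its second derivative vanishes at `0` by symmetry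
alone. The tangential component is the radial function `Φ(√(c² + s²))` with `c = δ + r` and
`Φ(ρ) = h(ρ − δ) c / ρ`; its first derivative is `s · Φ'(√(c² + s²)) / √(c² + s²)`, so its
second derivative at `0` is the value `Φ'(c) / c` of the continuous cofactor. -/

section Derivatives

variable {𝕜 F : Type*} [NontriviallyNormedField 𝕜] [NormedAddCommGroup F] [NormedSpace 𝕜 F]
  {f k : 𝕜 → F}

theorem Function.Even.deriv_odd (hf : f.Even) : (deriv f).Odd := fun x => by
  have h := deriv_comp_neg f x
  rw [funext hf] at h
  rw [h, neg_neg]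

theorem Function.Odd.deriv_even (hf : f.Odd) : (deriv f).Even := fun x => by
  have hneg : (fun y => f (-y)) = fun y => -f y := funext hf
  rw [← neg_neg (deriv f (-x)), ← deriv_comp_neg, hneg, deriv.fun_neg, neg_neg]

theorem Function.Odd.deriv_deriv_zero [IsAddTorsionFree F] (hf : f.Odd) :
    deriv (deriv f) 0 = 0 :=
  hf.deriv_even.deriv_odd.map_zero

theorem hasDerivAt_sub_smul_of_continuousAt {a : 𝕜} (hk : ContinuousAt k a) :
    HasDerivAt (fun x => (x - a) • k x) (k a) a := by
  rw [hasDerivAt_iff_tendsto_slope]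
  refine (hk.mono_left nhdsWithin_le_nhds).congr' ?_
  filter_upwards [self_mem_nhdsWithin] with x hx
  rw [slope_def_module, sub_self, zero_smul, sub_zero, smul_smul,
    inv_mul_cancel₀ (sub_ne_zero.2 hx), one_smul]

end Derivatives

theorem deriv_deriv_comp_sqrt_sq_add_sq_zero {Φ Φ' : ℝ → ℝ} {c : ℝ} (hc : 0 < c)
    (hΦ : ∀ ρ, c ≤ ρ → HasDerivAt Φ (Φ' ρ) ρ) (hΦ' : ContinuousAt Φ' c) :
    deriv (deriv fun s => Φ √(c ^ 2 + s ^ 2)) 0 = Φ' c / c := by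
  set R : ℝ → ℝ := fun s => √(c ^ 2 + s ^ 2)
  have hR_pos : ∀ s, 0 < R s := fun s => Real.sqrt_pos.2 (by positivity)
  have hR_ge : ∀ s, c ≤ R s := fun s =>
    Real.le_sqrt_of_sq_le (le_add_of_nonneg_right (sq_nonneg s))
  have hR_zero : R 0 = c := by simp [R, Real.sqrt_sq hc.le]
  have hR : ∀ s, HasDerivAt R (s / R s) s := fun s => by
    convert ((hasDerivAt_pow 2 s).const_add (c ^ 2)).sqrt (by positivity) using 1
    simp only [R]
    field_simp
    ring
  have hderiv : deriv (fun s => Φ (R s)) = fun s => (s - 0) • (Φ' (R s) / R s) := by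
    funext s
    refine ((hΦ _ (hR_ge s)).comp s (hR s)).deriv.trans ?_
    rw [smul_eq_mul]
    ring
  have hcont : ContinuousAt (fun s => Φ' (R s) / R s) 0 := by
    have hR_cont : Continuous R := by fun_prop
    exact (hΦ'.comp_of_eq hR_cont.continuousAt hR_zero).div hR_cont.continuousAt
      (hR_pos 0).ne'
  rw [hderiv, (hasDerivAt_sub_smul_of_continuousAt hcont).deriv, hR_zero]

section Profile

variable (α₁ α₂ : ℝ)

theorem hasDerivAt_prof (x : ℝ) : HasDerivAt (prof α₁ α₂) (α₁ - α₂ * x) x := by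
  refine (((hasDerivAt_id' x).const_mul α₁).sub
    ((hasDerivAt_pow 2 x).const_mul (α₂ / 2))).congr_deriv ?_
  norm_num
  ring

theorem deriv_prof : deriv (prof α₁ α₂) = fun x => α₁ - α₂ * x :=
  funext fun x => (hasDerivAt_prof α₁ α₂ x).deriv

theorem deriv_deriv_prof (t : ℝ) : deriv (deriv (prof α₁ α₂)) t = -α₂ := by
  simp [deriv_prof]

theorem hasDerivAt_prof_sub_mul_div (δ c : ℝ) {ρ : ℝ} (hρ : ρ ≠ 0) :
    HasDerivAt (fun ρ => prof α₁ α₂ (ρ - δ) * (c / ρ))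
      ((α₁ - α₂ * (ρ - δ)) * (c / ρ) + prof α₁ α₂ (ρ - δ) * (-c / ρ ^ 2)) ρ :=
  (((hasDerivAt_prof α₁ α₂ _).comp_sub_const ρ δ).mul
    ((hasDerivAt_const ρ c).div (hasDerivAt_id' ρ) hρ)).congr_deriv (by simp)

end Profile

theorem second_derivatives_of_components_general
    (δ α₁ α₂ : ℝ) (hδ : 0 < δ)
    (r : ℝ) (hr : 0 ≤ r)
    (f g : ℝ → ℝ)
    (hf : f = fun s : ℝ =>
      prof α₁ α₂ (Real.sqrt ((δ + r) ^ 2 + s ^ 2) - δ)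
        * ((δ + r) / Real.sqrt ((δ + r) ^ 2 + s ^ 2)))
    (hg : g = fun s : ℝ =>
      -(prof α₁ α₂ (Real.sqrt ((δ + r) ^ 2 + s ^ 2) - δ)
        * (s / Real.sqrt ((δ + r) ^ 2 + s ^ 2)))) :
    deriv (deriv f) 0 = (1 / (r + δ)) * (α₁ - α₂ * r - prof α₁ α₂ r / (r + δ))
    ∧ deriv (deriv g) 0 = 0
    ∧ ∀ t : ℝ, deriv (deriv (prof α₁ α₂)) t = -α₂ := by
  have hc : 0 < δ + r := by positivity
  have hΦ' : ContinuousAt (fun ρ => (α₁ - α₂ * (ρ - δ)) * ((δ + r) / ρ)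
      + prof α₁ α₂ (ρ - δ) * (-(δ + r) / ρ ^ 2)) (δ + r) := by
    unfold prof
    fun_prop (disch := positivity)
  have hg_odd : g.Odd := fun s => by
    simp only [hg, neg_sq, neg_div, mul_neg, neg_neg]
  refine ⟨?_, hg_odd.deriv_deriv_zero, deriv_deriv_prof α₁ α₂⟩
  rw [hf, deriv_deriv_comp_sqrt_sq_add_sq_zero hc
    (fun ρ hρ => hasDerivAt_prof_sub_mul_div α₁ α₂ δ (δ + r) (hc.trans_le hρ).ne') hΦ',
    add_sub_cancel_left]
  field_simp
  ring

/-- Second derivatives of the tangential and normal components of the parallel laminar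
flow in Cartesian coordinates based at a boundary point:
`f''(0) = (1/(r + δ))(α₁ − α₂ r − h(r)/(r + δ))`, `g''(0) = 0`, and the profile `h`
has constant second derivative `−α₂`. -/
theorem second_derivatives_of_components
    (δ α₁ α₂ : ℝ) (hδ : 0 < δ) (hα₁ : 0 < α₁) (hα₂ : 0 < α₂)
    (r : ℝ) (hr : 0 ≤ r)
    (f g : ℝ → ℝ)
    (hf : f = fun s : ℝ =>
      prof α₁ α₂ (Real.sqrt ((δ + r) ^ 2 + s ^ 2) - δ)
        * ((δ + r) / Real.sqrt ((δ + r) ^ 2 + s ^ 2)))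
    (hg : g = fun s : ℝ =>
      -(prof α₁ α₂ (Real.sqrt ((δ + r) ^ 2 + s ^ 2) - δ)
        * (s / Real.sqrt ((δ + r) ^ 2 + s ^ 2)))) :
    deriv (deriv f) 0 = (1 / (r + δ)) * (α₁ - α₂ * r - prof α₁ α₂ r / (r + δ))
    ∧ deriv (deriv g) 0 = 0
    ∧ ∀ t : ℝ, deriv (deriv (prof α₁ α₂)) t = -α₂ :=
  second_derivatives_of_components_general δ α₁ α₂ hδ r hr f g hf hg
end
end
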